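/- Let 𝔸 be a countable atomless Boolean algebra, let 𝔄 be a finite subalgebra of 𝔸, let p : 𝔄 → [0,1] ∩ ℚ be a normalised submeasure, and let n ∈ ℕ. Then there exist a finite subalgebra ℭ of 𝔸 containing 𝔄 and a normalised submeasure q : ℭ → [0,1] ∩ ℚ extending p that is n-pathological, i.e. there are pairwise disjoint a₁, ..., aₙ ∈ ℭ with q(aᵢ) = 1 for every i. -/

import Mathlib

/-!
The atoms of the finite subalgebra `S` partition `⊤`, and since `A` is atomless each atom splits
into `n` nonzero disjoint pieces. The joins of pieces form a finite subalgebra `C ⊇ S`, and the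
join `aᵢ` of the `i`-th pieces of all atoms meets every atom of `S`, so the only element of `S`
above `aᵢ` is `⊤`. Extend `p` by `q c = p ĉ`, where `ĉ` is the least element of `S` above `c`:
`c ↦ ĉ` is monotone, preserves joins and fixes `S`, so `q` is a submeasure extending `p`, and
`q aᵢ = p ⊤ = 1`.
-/

def IsBoolSubalgebra {A : Type*} [BooleanAlgebra A] (S : Set A) : Prop :=
  ⊥ ∈ S ∧ ⊤ ∈ S ∧ (∀ x ∈ S, ∀ y ∈ S, x ⊔ y ∈ S) ∧
    (∀ x ∈ S, ∀ y ∈ S, x ⊓ y ∈ S) ∧ (∀ x ∈ S, xᶜ ∈ S)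

section

open Finset Function

namespace IsBoolSubalgebra

variable {A : Type*} [BooleanAlgebra A] {S : Set A} (hS : IsBoolSubalgebra S)
include hS

theorem bot_mem : ⊥ ∈ S := hS.1
theorem top_mem : ⊤ ∈ S := hS.2.1
theorem supClosed : SupClosed S := fun x hx y hy => hS.2.2.1 x hx y hy
theorem infClosed : InfClosed S := fun x hx y hy => hS.2.2.2.1 x hx y hy
theorem compl_mem {x : A} (hx : x ∈ S) : xᶜ ∈ S := hS.2.2.2.2 x hx

end IsBoolSubalgebra

section UpperHull

variable {α : Type*} [Lattice α] [OrderTop α] {S : Finset α} {b c d : α}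

open scoped Classical in
noncomputable def upperHull (S : Finset α) (c : α) : α := {b ∈ S | c ≤ b}.inf id

theorem le_upperHull : c ≤ upperHull S c := by
  classical
  exact Finset.le_inf fun _ hb => (mem_filter.mp hb).2

theorem upperHull_le (hb : b ∈ S) (hcb : c ≤ b) : upperHull S c ≤ b := by
  classical
  exact inf_le (f := id) (mem_filter.mpr ⟨hb, hcb⟩)

theorem upperHull_mono : Monotone (upperHull S) := fun _ _ hcd => by
  classical
  exact Finset.le_inf fun _ hb =>
    upperHull_le (mem_filter.mp hb).1 (hcd.trans (mem_filter.mp hb).2)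

theorem upperHull_eq_self (hb : b ∈ S) : upperHull S b = b :=
  le_antisymm (upperHull_le hb le_rfl) le_upperHull

theorem upperHull_mem (hS : InfClosed (S : Set α)) (htop : ⊤ ∈ S) : upperHull S c ∈ S := by
  classical
  exact hS.finsetInf_mem ⟨⊤, mem_filter.mpr ⟨htop, le_top⟩⟩ fun b hb => (mem_filter.mp hb).1

theorem upperHull_sup (hsup : SupClosed (S : Set α)) (hinf : InfClosed (S : Set α))
    (htop : ⊤ ∈ S) : upperHull S (c ⊔ d) = upperHull S c ⊔ upperHull S d :=
  le_antisymm
    (upperHull_le (hsup (upperHull_mem hinf htop) (upperHull_mem hinf htop))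
      (sup_le_sup le_upperHull le_upperHull))
    (upperHull_mono.le_map_sup c d)

theorem upperHull_eq_top (hc : ∀ b ∈ S, c ≤ b → b = ⊤) : upperHull S c = ⊤ := by
  classical
  exact (Finset.inf_eq_top_iff _ _).mpr fun b hb =>
    hc b (mem_filter.mp hb).1 (mem_filter.mp hb).2

end UpperHull

theorem Finset.sup_inf_sup_of_pairwise_disjoint {ι α : Type*} [DistribLattice α] [OrderBot α]
    [DecidableEq ι] {e : ι → α} (he : Pairwise (Disjoint on e)) (s t : Finset ι) :
    s.sup e ⊓ t.sup e = (s ∩ t).sup e := by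
  refine le_antisymm ?_ (le_inf (sup_mono inter_subset_left) (sup_mono inter_subset_right))
  rw [sup_inf_sup]
  refine Finset.sup_le fun ⟨i, j⟩ hij => ?_
  obtain ⟨hi, hj⟩ := mem_product.mp hij
  obtain rfl | hne := eq_or_ne i j
  · simpa using le_sup (f := e) (mem_inter.mpr ⟨hi, hj⟩)
  · simp [(he hne).eq_bot]

variable {A : Type*} [BooleanAlgebra A]

theorem isBoolSubalgebra_range_finsetSup {ι : Type*} [Fintype ι] {e : ι → A}
    (he : Pairwise (Disjoint on e)) (htop : univ.sup e = ⊤) :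
    IsBoolSubalgebra (Set.range fun s : Finset ι => s.sup e) := by
  classical
  refine ⟨⟨∅, sup_empty⟩, ⟨univ, htop⟩, ?_, ?_, ?_⟩
  · rintro _ ⟨s, rfl⟩ _ ⟨t, rfl⟩
    exact ⟨s ∪ t, sup_union⟩
  · rintro _ ⟨s, rfl⟩ _ ⟨t, rfl⟩
    exact ⟨s ∩ t, (sup_inf_sup_of_pairwise_disjoint he s t).symm⟩
  · rintro _ ⟨s, rfl⟩
    refine ⟨sᶜ, (IsCompl.compl_eq ⟨?_, ?_⟩).symm⟩
    · rw [disjoint_iff, sup_inf_sup_of_pairwise_disjoint he, inter_compl, sup_empty]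
    · rw [codisjoint_iff, ← sup_union, union_compl, htop]

theorem exists_fin_partition_of_forall_not_isAtom (hA : ∀ a : A, ¬IsAtom a) {n : ℕ}
    (hn : 1 ≤ n) {t : A} (ht : t ≠ ⊥) :
    ∃ d : Fin n → A, (∀ i, d i ≠ ⊥) ∧ Pairwise (Disjoint on d) ∧ univ.sup d = t := by
  induction n, hn using Nat.le_induction generalizing t with
  | base => exact ⟨fun _ => t, fun _ => ht, Subsingleton.pairwise, by simp⟩
  | succ n _ ih =>
    obtain ⟨b, hbt, hb⟩ : ∃ b < t, b ≠ ⊥ := by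
      simpa [IsAtom, ht, Ne.symm ht] using hA t
    obtain ⟨d, hd, hdisj, hsup⟩ := ih (sdiff_eq_bot_iff.not.mpr hbt.not_ge)
    have hbd : ∀ i, Disjoint b (d i) := fun i =>
      disjoint_sdiff_self_right.mono_right (hsup ▸ le_sup (mem_univ i))
    refine ⟨Fin.cons b d, Fin.cases hb hd, ?_, ?_⟩
    · intro i j hij
      cases i using Fin.cases <;> cases j using Fin.cases
      · exact absurd rfl hij
      · exact hbd _
      · exact (hbd _).symm
      · exact hdisj (ne_of_apply_ne Fin.succ hij)
    · rw [Fin.univ_succ, sup_cons, sup_map]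
      simp [comp_def, hsup, hbt.le]

section Atoms

variable {S : Finset A} {b t t' : A}

open scoped Classical in
noncomputable def atomsOf (S : Finset A) : Finset A :=
  {t ∈ S | Minimal (fun x => x ∈ S ∧ x ≠ ⊥) t}

theorem mem_atomsOf : t ∈ atomsOf S ↔ Minimal (fun x => x ∈ S ∧ x ≠ ⊥) t := by
  simp only [atomsOf, mem_filter, and_iff_right_iff_imp]
  exact fun h => h.prop.1

theorem ne_bot_of_mem_atomsOf (ht : t ∈ atomsOf S) : t ≠ ⊥ :=
  (mem_atomsOf.mp ht).prop.2

theorem exists_mem_atomsOf_le (hb : b ∈ S) (hb0 : b ≠ ⊥) : ∃ t ∈ atomsOf S, t ≤ b := by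
  classical
  obtain ⟨t, htb, ht⟩ := {x ∈ S | x ≠ ⊥}.exists_le_minimal (mem_filter.mpr ⟨hb, hb0⟩)
  exact ⟨t, mem_atomsOf.mpr (by simpa using ht), htb⟩

theorem disjoint_of_mem_atomsOf (hS : InfClosed (S : Set A)) (ht : t ∈ atomsOf S)
    (ht' : t' ∈ atomsOf S) (hne : t ≠ t') : Disjoint t t' := by
  rw [mem_atomsOf] at ht ht'
  by_contra h
  have htt' : t ≤ t' :=
    (ht.le_of_le ⟨hS ht.prop.1 ht'.prop.1, disjoint_iff.not.mp h⟩ inf_le_left).trans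
      inf_le_right
  exact hne (le_antisymm htt' (ht'.le_of_le ht.prop htt'))

theorem exists_subset_atomsOf_sup_eq (hS : IsBoolSubalgebra (S : Set A)) (hb : b ∈ S) :
    ∃ s ⊆ atomsOf S, s.sup id = b := by
  classical
  set v := {t ∈ atomsOf S | t ≤ b}.sup id
  have hvS : v ∈ S :=
    sup_induction hS.bot_mem (fun _ h₁ _ h₂ => hS.supClosed h₁ h₂)
      fun t ht => (mem_atomsOf.mp (mem_filter.mp ht).1).prop.1
  refine ⟨_, filter_subset _ _, le_antisymm (Finset.sup_le fun t ht => (mem_filter.mp ht).2) ?_⟩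
  by_contra hbv
  have hbvS : b \ v ∈ S := sdiff_eq (x := b) ▸ hS.infClosed hb (hS.compl_mem hvS)
  obtain ⟨t, ht, htbv⟩ := exists_mem_atomsOf_le hbvS (sdiff_eq_bot_iff.not.mpr hbv)
  have htv : t ≤ v := le_sup (f := id) (mem_filter.mpr ⟨ht, htbv.trans sdiff_le⟩)
  exact ne_bot_of_mem_atomsOf ht
    (disjoint_self.mp ((disjoint_sdiff_self_left (x := v) (y := b)).mono htbv htv))

theorem eq_top_of_forall_atomsOf_not_disjoint (hS : ∀ x ∈ S, xᶜ ∈ S) {c : A}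
    (hc : ∀ t ∈ atomsOf S, ¬Disjoint t c) (hb : b ∈ S) (hcb : c ≤ b) : b = ⊤ := by
  by_contra hb0
  obtain ⟨t, ht, htb⟩ := exists_mem_atomsOf_le (hS b hb) (compl_eq_bot.not.mpr hb0)
  exact hc t ht (disjoint_compl_left.mono htb hcb)

theorem exists_refinement_atomsOf (hA : ∀ a : A, ¬IsAtom a) (hS : InfClosed (S : Set A))
    {n : ℕ} (hn : 1 ≤ n) :
    ∃ e : atomsOf S × Fin n → A, (∀ x, e x ≠ ⊥) ∧ (∀ x, e x ≤ x.1) ∧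
      Pairwise (Disjoint on e) ∧ ∀ t, univ.sup (fun i => e (t, i)) = t := by
  choose d hd0 hdisj hsup using fun t : atomsOf S =>
    exists_fin_partition_of_forall_not_isAtom hA hn (ne_bot_of_mem_atomsOf t.2)
  have hd_le : ∀ t i, d t i ≤ t := fun t i => hsup t ▸ le_sup (mem_univ i)
  refine ⟨fun x => d x.1 x.2, fun x => hd0 _ _, fun x => hd_le _ _, ?_, hsup⟩
  rintro ⟨t, i⟩ ⟨t', j⟩ hne
  obtain rfl | htt' := eq_or_ne t t'
  · exact hdisj t (ne_of_apply_ne (Prod.mk t) hne)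
  · exact (disjoint_of_mem_atomsOf hS t.2 t'.2 (Subtype.coe_ne_coe.mpr htt')).mono
      (hd_le _ _) (hd_le _ _)

theorem exists_finite_superalgebra_disjoint_dense (hA : ∀ a : A, ¬IsAtom a)
    (hS : IsBoolSubalgebra (S : Set A)) {n : ℕ} (hn : 1 ≤ n) :
    ∃ C : Set A, IsBoolSubalgebra C ∧ C.Finite ∧ ↑S ⊆ C ∧ ∃ a : Fin n → A,
      (∀ i, a i ∈ C) ∧ Pairwise (Disjoint on a) ∧ ∀ i, ∀ b ∈ S, a i ≤ b → b = ⊤ := by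
  classical
  obtain ⟨e, he0, he_le, he, hsup⟩ := exists_refinement_atomsOf hA hS.infClosed hn
  have hblocks : ∀ s ⊆ atomsOf S,
      ({x | ↑x.1 ∈ s} : Finset (atomsOf S × Fin n)).sup e = s.sup id := by
    intro s hs
    refine le_antisymm
      (Finset.sup_le fun x hx => (he_le x).trans (le_sup (f := id) (mem_filter.mp hx).2)) ?_
    refine Finset.sup_le fun t ht => (hsup ⟨t, hs ht⟩).ge.trans (Finset.sup_le fun i _ => ?_)
    exact le_sup (f := e) (b := (⟨t, hs ht⟩, i)) (mem_filter.mpr ⟨mem_univ _, ht⟩)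
  have htop : univ.sup e = ⊤ := by
    obtain ⟨s, hs, hstop⟩ := exists_subset_atomsOf_sup_eq hS hS.top_mem
    exact top_le_iff.mp (hstop ▸ hblocks s hs ▸ sup_mono (subset_univ _))
  refine ⟨_, isBoolSubalgebra_range_finsetSup he htop, Set.finite_range _, fun b hb => ?_,
    fun i => ({x | x.2 = i} : Finset (atomsOf S × Fin n)).sup e, fun i => ⟨_, rfl⟩,
    fun i j hij => ?_, fun i b hb => ?_⟩
  · obtain ⟨s, hs, rfl⟩ := exists_subset_atomsOf_sup_eq hS hb
    exact ⟨_, hblocks s hs⟩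
  · refine Finset.disjoint_sup_left.mpr fun x hx => Finset.disjoint_sup_right.mpr fun y hy => ?_
    refine he fun hxy => hij ?_
    exact (mem_filter.mp hx).2.symm.trans (hxy ▸ (mem_filter.mp hy).2)
  · refine eq_top_of_forall_atomsOf_not_disjoint (fun _ => hS.compl_mem)
      (fun t ht hdisj => ?_) hb
    refine he0 (⟨t, ht⟩, i) (disjoint_self.mp (hdisj.mono (he_le (⟨t, ht⟩, i)) ?_))
    exact le_sup (f := e) (s := {x | x.2 = i}) (b := (⟨t, ht⟩, i)) (by simp)

end Atoms

end

theorem statement3 (A : Type*) [BooleanAlgebra A]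
    (hatomless : ∀ a : A, ¬ IsAtom a)
    (S : Set A) (hS : IsBoolSubalgebra S) (hSfin : S.Finite)
    (p : A → ℝ)
    (hp0 : p ⊥ = 0) (hp1 : p ⊤ = 1)
    (hpmono : ∀ a ∈ S, ∀ b ∈ S, a ≤ b → p a ≤ p b)
    (hpsub : ∀ a ∈ S, ∀ b ∈ S, p (a ⊔ b) ≤ p a + p b)
    (hprange : ∀ a ∈ S, (0 ≤ p a ∧ p a ≤ 1) ∧ ∃ q : ℚ, p a = (q : ℝ))
    (n : ℕ) (hn : 1 ≤ n) :
    ∃ C : Set A, IsBoolSubalgebra C ∧ C.Finite ∧ S ⊆ C ∧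
      ∃ q : A → ℝ,
        q ⊥ = 0 ∧ q ⊤ = 1 ∧
        (∀ a ∈ C, ∀ b ∈ C, a ≤ b → q a ≤ q b) ∧
        (∀ a ∈ C, ∀ b ∈ C, q (a ⊔ b) ≤ q a + q b) ∧
        (∀ a ∈ C, (0 ≤ q a ∧ q a ≤ 1) ∧ ∃ r : ℚ, q a = (r : ℝ)) ∧
        (∀ a ∈ S, q a = p a) ∧
        ∃ a : Fin n → A, (∀ i, a i ∈ C) ∧
          (∀ i j, i ≠ j → a i ⊓ a j = ⊥) ∧ (∀ i, q (a i) = 1) := by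
  set T := hSfin.toFinset
  have hT : IsBoolSubalgebra (T : Set A) := by rwa [hSfin.coe_toFinset]
  have hmemT : ∀ {b}, b ∈ S → b ∈ T := hSfin.mem_toFinset.mpr
  have hullT : ∀ c, upperHull T c ∈ S := fun c =>
    hSfin.mem_toFinset.mp (upperHull_mem hT.infClosed hT.top_mem)
  obtain ⟨C, hC, hCfin, hTC, a, haC, hadisj, hadense⟩ :=
    exists_finite_superalgebra_disjoint_dense hatomless hT hn
  refine ⟨C, hC, hCfin, by simpa [T] using hTC, fun c => p (upperHull T c),
    (congrArg p (upperHull_eq_self (hmemT hS.bot_mem))).trans hp0,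
    (congrArg p (upperHull_eq_self (hmemT hS.top_mem))).trans hp1,
    fun x _ y _ hxy => hpmono _ (hullT x) _ (hullT y) (upperHull_mono hxy),
    fun x _ y _ => (congrArg p (upperHull_sup hT.supClosed hT.infClosed hT.top_mem)).trans_le
      (hpsub _ (hullT x) _ (hullT y)),
    fun x _ => hprange _ (hullT x),
    fun x hx => congrArg p (upperHull_eq_self (hmemT hx)),
    a, haC, fun i j hij => (hadisj hij).eq_bot,
    fun i => (congrArg p (upperHull_eq_top (hadense i))).trans hp1⟩
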